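/- arXiv:1901.03466 — 3 statements merged into one kernel-verified Lean document; each statement's English description precedes it below -/
import Mathlib

section
/- As x → ∞, ln Γ(x) = (1/2)ln(2π) + (x − 1/2)ln x − x + 1/(12x) + o(1/x). -/
/-!
Write `R = log Γ - S` for the remainder of the approximation `S` in the statement. The functional
equation `log Γ (x + 1) = log Γ x + log x` gives `R x - R (x + 1) = D x`, where
`D x = S (x + 1) - S x - log x` is explicit; expanding `log (1 + 1/x)` to third order shows
`|D x| ≤ 5 / x³`, the term `1/(12x)` being exactly what cancels the `x⁻²` part of `D`.
Telescoping, `R x = ∑_{k<n} D (x + k) + R (x + n)`. Stirling's formula for `n!` and Euler's limit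
`log Γ (n + x) - log Γ n - x log n → 0` give `R (x + n) → 0`, hence
`|R x| ≤ ∑_k 5 / (x + k)³ = O(1/x²)`.
-/

open Real Filter Asymptotics Topology

noncomputable def stirlingApprox (x : ℝ) : ℝ :=
  (1 / 2) * log (2 * π) + (x - 1 / 2) * log x - x + 1 / (12 * x)

noncomputable def stirlingRem (x : ℝ) : ℝ := log (Gamma x) - stirlingApprox x

noncomputable def stirlingDefect (x : ℝ) : ℝ :=
  stirlingApprox (x + 1) - stirlingApprox x - log x

lemma log_Gamma_add_one {x : ℝ} (hx : 0 < x) : log (Gamma (x + 1)) = log (Gamma x) + log x := by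
  rw [Gamma_add_one hx.ne', log_mul hx.ne' (Gamma_pos_of_pos hx).ne', add_comm]

lemma stirlingRem_add_one {x : ℝ} (hx : 0 < x) :
    stirlingRem (x + 1) = stirlingRem x - stirlingDefect x := by
  rw [stirlingRem, stirlingRem, stirlingDefect, log_Gamma_add_one hx]
  ring

lemma stirlingRem_natCast {n : ℕ} (hn : n ≠ 0) :
    stirlingRem n = log (Stirling.stirlingSeq n) - log √π - 1 / (12 * n) := by
  have hn' : (0 : ℝ) < n := by positivity
  have hΓ : log (Gamma n) = log n.factorial - log n := by
    rw [← Gamma_nat_eq_factorial, eq_sub_iff_add_eq, ← log_Gamma_add_one hn']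
  rw [stirlingRem, stirlingApprox, Stirling.log_stirlingSeq_formula, hΓ, log_sqrt pi_pos.le,
    log_mul two_ne_zero hn'.ne', log_mul two_ne_zero pi_ne_zero, log_div hn'.ne' (exp_ne_zero 1),
    log_exp]
  ring

lemma tendsto_one_div_twelve_mul_atTop : Tendsto (fun x : ℝ => 1 / (12 * x)) atTop (𝓝 0) :=
  tendsto_const_nhds.div_atTop (tendsto_id.const_mul_atTop (by norm_num))

lemma tendsto_stirlingRem_natCast : Tendsto (fun n : ℕ => stirlingRem n) atTop (𝓝 0) := by
  have hlog : Tendsto (fun n : ℕ => log (Stirling.stirlingSeq n)) atTop (𝓝 (log √π)) :=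
    ((continuousAt_log (by positivity)).tendsto).comp Stirling.tendsto_stirlingSeq_sqrt_pi
  have h := (hlog.sub_const (log √π)).sub
    (tendsto_one_div_twelve_mul_atTop.comp tendsto_natCast_atTop_atTop)
  rw [sub_self, sub_zero] at h
  refine h.congr' ?_
  filter_upwards [eventually_ne_atTop 0] with n hn
  exact (stirlingRem_natCast hn).symm

lemma tendsto_log_Gamma_natCast_add_sub {x : ℝ} (hx : 0 < x) :
    Tendsto (fun n : ℕ => log (Gamma (n + x)) - log (Gamma n) - x * log n) atTop (𝓝 0) := by
  rw [← tendsto_add_atTop_iff_nat 1]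
  have h := ((tendsto_const_nhds (x := log (Gamma x))).sub
    (BohrMollerup.tendsto_log_gamma hx)).sub (tendsto_log_nat_add_one_sub_log.const_mul x)
  rw [sub_self, mul_zero, sub_zero] at h
  refine h.congr fun n => ?_
  have hsum := BohrMollerup.f_add_nat_eq (f := log ∘ Gamma) @log_Gamma_add_one hx (n + 1)
  simp only [Function.comp_apply] at hsum
  rw [BohrMollerup.logGammaSeq, ← Gamma_nat_eq_factorial, add_comm _ x, hsum]
  push_cast
  ring

lemma tendsto_stirlingApprox_add_sub (x : ℝ) :
    Tendsto (fun y => stirlingApprox (y + x) - stirlingApprox y - x * log y) atTop (𝓝 0) := by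
  have hlog : Tendsto (fun y : ℝ => log (1 + x / y)) atTop (𝓝 0) := by
    have h1 : Tendsto (fun y : ℝ => 1 + x / y) atTop (𝓝 1) := by
      simpa using tendsto_const_nhds.add (tendsto_const_nhds.div_atTop (tendsto_id (α := ℝ)))
    simpa [Function.comp_def] using (continuousAt_log one_ne_zero).tendsto.comp h1
  have h := (((tendsto_mul_log_one_add_div_atTop x).sub_const x).add
    (hlog.const_mul (x - 1 / 2))).add
    ((tendsto_one_div_twelve_mul_atTop.comp (tendsto_atTop_add_const_right _ x tendsto_id)).sub
      tendsto_one_div_twelve_mul_atTop)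
  simp only [sub_self, mul_zero, add_zero] at h
  refine h.congr' ?_
  filter_upwards [eventually_gt_atTop 0, eventually_gt_atTop (-x)] with y hy hyx
  have hsplit : log (y + x) = log y + log (1 + x / y) := by
    rw [show 1 + x / y = (y + x) / y by field_simp, log_div (by linarith) hy.ne']
    ring
  simp only [stirlingApprox, Function.comp_apply, id, hsplit]
  ring

lemma tendsto_stirlingRem_add_natCast {x : ℝ} (hx : 0 < x) :
    Tendsto (fun n : ℕ => stirlingRem (x + n)) atTop (𝓝 0) := by
  have h := ((tendsto_log_Gamma_natCast_add_sub hx).sub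
    ((tendsto_stirlingApprox_add_sub x).comp tendsto_natCast_atTop_atTop)).add
    tendsto_stirlingRem_natCast
  rw [sub_zero, add_zero] at h
  refine h.congr fun n => ?_
  simp only [Function.comp_apply, stirlingRem, add_comm x]
  ring

lemma stirlingDefect_eq {x : ℝ} (hx : 0 < x) :
    stirlingDefect x = (x + 1 / 2) * log (1 + 1 / x) - 1 - 1 / (12 * x * (x + 1)) := by
  rw [show 1 + 1 / x = (x + 1) / x by field_simp, log_div (by positivity) hx.ne', stirlingDefect,
    stirlingApprox, stirlingApprox]
  field_simp
  ring

lemma abs_log_one_add_inv_sub_le {x : ℝ} (hx : 2 ≤ x) :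
    |log (1 + 1 / x) - (1 / x - 1 / (2 * x ^ 2) + 1 / (3 * x ^ 3))| ≤ 2 / x ^ 4 := by
  have hx0 : 0 < x := by linarith
  have hx1 : 0 < x - 1 := by linarith
  have hu : |-(1 / x)| < 1 := by
    rw [abs_neg, abs_of_pos (by positivity), div_lt_one hx0]
    linarith
  have hsum : ∑ i ∈ Finset.range 3, (-(1 / x)) ^ (i + 1) / ((i : ℝ) + 1)
      = -(1 / x - 1 / (2 * x ^ 2) + 1 / (3 * x ^ 3)) := by
    simp only [Finset.sum_range_succ, Finset.sum_range_zero]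
    ring
  have h := abs_log_sub_add_sum_range_le hu 3
  rw [hsum, sub_neg_eq_add, neg_add_eq_sub, abs_neg, abs_of_pos (one_div_pos.mpr hx0)] at h
  refine h.trans (le_of_eq_of_le (b := 1 / (x ^ 3 * (x - 1))) (by norm_num; field_simp) ?_)
  rw [div_le_div_iff₀ (mul_pos (pow_pos hx0 3) hx1) (by positivity)]
  nlinarith [pow_pos hx0 3]

lemma abs_stirlingDefect_le {x : ℝ} (hx : 2 ≤ x) : |stirlingDefect x| ≤ 5 / x ^ 3 := by
  have hx0 : 0 < x := by linarith
  set E := log (1 + 1 / x) - (1 / x - 1 / (2 * x ^ 2) + 1 / (3 * x ^ 3)) with hE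
  have hexpand :
      stirlingDefect x = 1 / (12 * x ^ 2 * (x + 1)) + 1 / (6 * x ^ 3) + (x + 1 / 2) * E := by
    rw [stirlingDefect_eq hx0, hE]
    field_simp
    ring
  have hmain : 1 / (12 * x ^ 2 * (x + 1)) ≤ 1 / (12 * x ^ 3) :=
    one_div_le_one_div_of_le (by positivity) (by nlinarith)
  have htail : |(x + 1 / 2) * E| ≤ 4 / x ^ 3 := calc
    |(x + 1 / 2) * E| = (x + 1 / 2) * |E| := by rw [abs_mul, abs_of_pos (by positivity)]
    _ ≤ (2 * x) * (2 / x ^ 4) :=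
        mul_le_mul (by linarith) (abs_log_one_add_inv_sub_le hx) (abs_nonneg _) (by positivity)
    _ = 4 / x ^ 3 := by field_simp; ring
  rw [hexpand]
  calc _ ≤ |1 / (12 * x ^ 2 * (x + 1)) + 1 / (6 * x ^ 3)| + |(x + 1 / 2) * E| := abs_add_le _ _
    _ ≤ 1 / (12 * x ^ 3) + 1 / (6 * x ^ 3) + 4 / x ^ 3 := by
        rw [abs_of_pos (by positivity)]
        linarith
    _ ≤ 5 / x ^ 3 := by
        rw [show 1 / (12 * x ^ 3) + 1 / (6 * x ^ 3) + 4 / x ^ 3 = (17 / 4) / x ^ 3 by ring]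
        gcongr
        norm_num

lemma two_div_pow_three_le_sub {y : ℝ} (hy : 1 / 2 < y) :
    2 / y ^ 3 ≤ 1 / (y - 1 / 2) ^ 2 - 1 / (y + 1 / 2) ^ 2 := by
  have hy0 : 0 < y := by linarith
  have hy1 : 0 < y - 1 / 2 := by linarith
  rw [div_sub_div _ _ (by positivity) (by positivity),
    div_le_div_iff₀ (by positivity) (by positivity)]
  nlinarith [pow_pos hy0 3, sq_nonneg y, pow_pos hy0 2, mul_pos hy0 hy1]

lemma stirlingRem_eq_sum_add {x : ℝ} (hx : 0 < x) (n : ℕ) :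
    stirlingRem x = ∑ k ∈ Finset.range n, stirlingDefect (x + k) + stirlingRem (x + n) := by
  have htel := Finset.sum_range_sub' (fun k : ℕ => stirlingRem (x + k)) n
  rw [Nat.cast_zero, add_zero] at htel
  rw [← sub_eq_iff_eq_add, ← htel]
  refine Finset.sum_congr rfl fun k _ => ?_
  rw [Nat.cast_add_one, ← add_assoc, stirlingRem_add_one (by positivity)]
  ring

lemma sum_abs_stirlingDefect_le {x : ℝ} (hx : 2 ≤ x) (n : ℕ) :
    ∑ k ∈ Finset.range n, |stirlingDefect (x + k)| ≤ (5 / 2) / (x - 1 / 2) ^ 2 := by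
  set h : ℕ → ℝ := fun k => (5 / 2) / (x + k - 1 / 2) ^ 2
  calc ∑ k ∈ Finset.range n, |stirlingDefect (x + k)|
      ≤ ∑ k ∈ Finset.range n, (h k - h (k + 1)) := by
        refine Finset.sum_le_sum fun k _ => ?_
        have hk : 2 ≤ x + k := le_add_of_le_of_nonneg hx k.cast_nonneg
        have htel := two_div_pow_three_le_sub (y := x + k) (by linarith)
        refine (abs_stirlingDefect_le hk).trans ?_
        simp only [h, Nat.cast_add_one]
        rw [show x + (k + 1) - 1 / 2 = x + k + 1 / 2 by ring]
        linear_combination (5 / 2) * htel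
    _ = h 0 - h n := Finset.sum_range_sub' h n
    _ ≤ (5 / 2) / (x - 1 / 2) ^ 2 := by
        simp only [h, Nat.cast_zero, add_zero, sub_le_self_iff]
        positivity

lemma abs_stirlingRem_le {x : ℝ} (hx : 2 ≤ x) : |stirlingRem x| ≤ 10 / x ^ 2 := by
  have hx0 : 0 < x := by linarith
  have hlim : Tendsto (fun n : ℕ => (5 / 2) / (x - 1 / 2) ^ 2 + |stirlingRem (x + n)|) atTop
      (𝓝 ((5 / 2) / (x - 1 / 2) ^ 2)) := by
    simpa using (tendsto_stirlingRem_add_natCast hx0).abs.const_add ((5 / 2) / (x - 1 / 2) ^ 2)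
  refine (ge_of_tendsto' hlim fun n => ?_).trans ?_
  · rw [stirlingRem_eq_sum_add hx0 n]
    refine (abs_add_le _ _).trans (add_le_add_left ?_ _)
    exact (Finset.abs_sum_le_sum_abs _ _).trans (sum_abs_stirlingDefect_le hx n)
  · rw [div_le_div_iff₀ (by nlinarith) (by positivity)]
    nlinarith

/-- Stirling's expansion with the `1/(12x)` correction: as `x → ∞`,
`ln Γ(x) = (1/2)ln(2π) + (x − 1/2)ln x − x + 1/(12x) + o(1/x)`. -/
theorem log_Gamma_stirling :
    (fun x : ℝ => Real.log (Real.Gamma x)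
        - ((1 / 2) * Real.log (2 * Real.pi) + (x - 1 / 2) * Real.log x - x
            + 1 / (12 * x)))
      =o[atTop] fun x : ℝ => 1 / x := by
  have hR : stirlingRem =O[atTop] fun x => (x ^ 2)⁻¹ := by
    refine IsBigO.of_bound 10 ?_
    filter_upwards [eventually_ge_atTop 2] with x hx
    simpa [div_eq_mul_inv] using abs_stirlingRem_le hx
  refine hR.trans_isLittleO ?_
  simpa using (isLittleO_pow_pow_atTop_of_lt (𝕜 := ℝ) one_lt_two).inv_rev (by simp)
end

section
/- As x → ∞, the digamma function satisfies ψ(x) = ln x − 1/(2x) − 1/(12x²) + o(1/x²). -/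
/-!
Let `R x = ψ x - (log x - 1 / (2x) - 1 / (12x²))`. Log-convexity of `Γ` squeezes `ψ x` between
`log x - 1 / x` and `log x`, so `R x → 0`. The recurrence `ψ (x + 1) = ψ x + 1 / x` together with
`log (1 + 1 / x) = 1 / x - 1 / (2x²) + 1 / (3x³) + O(x⁻⁴)` gives `|R (x + 1) - R x| ≤ 3 / x⁴`: the
coefficients `1 / 2` and `1 / 12` are exactly the ones cancelling the terms of order `x⁻², x⁻³`.
Telescoping over `x, x + 1, x + 2, …` then bounds `|R x|` by `3 / x³`.
-/

open Real Filter Asymptotics Set Topology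

/-- The digamma function `ψ = Γ'/Γ`, as the derivative of `log ∘ Γ`. -/
noncomputable def digamma (x : ℝ) : ℝ :=
  deriv (fun y => Real.log (Real.Gamma y)) x

theorem differentiableAt_log_Gamma {x : ℝ} (hx : 0 < x) :
    DifferentiableAt ℝ (fun y => log (Gamma y)) x :=
  (differentiableAt_Gamma fun m => by linarith [m.cast_nonneg (α := ℝ)]).log
    (Gamma_pos_of_pos hx).ne'

theorem digamma_add_one {x : ℝ} (hx : 0 < x) : digamma (x + 1) = digamma x + 1 / x := by
  have hshift : (fun y => log (Gamma (y + 1))) =ᶠ[𝓝 x] fun y => log (Gamma y) + log y := by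
    filter_upwards [eventually_gt_nhds hx] with y hy
    rw [Gamma_add_one hy.ne', log_mul hy.ne' (Gamma_pos_of_pos hy).ne', add_comm]
  rw [digamma, ← deriv_comp_add_const, hshift.deriv_eq,
    deriv_fun_add (differentiableAt_log_Gamma hx) (differentiableAt_log hx.ne'),
    deriv_log, one_div]
  rfl

theorem slope_log_Gamma {x : ℝ} (hx : 0 < x) :
    slope (fun y => log (Gamma y)) x (x + 1) = log x := by
  rw [slope_def_field, add_sub_cancel_left, div_one, Gamma_add_one hx.ne',
    log_mul hx.ne' (Gamma_pos_of_pos hx).ne', add_sub_cancel_right]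

theorem digamma_le_log {x : ℝ} (hx : 0 < x) : digamma x ≤ log x := by
  rw [← slope_log_Gamma hx]
  exact convexOn_log_Gamma.deriv_le_slope (mem_Ioi.mpr hx) (mem_Ioi.mpr (by linarith))
    (lt_add_one x) (differentiableAt_log_Gamma hx)

theorem log_le_digamma_add_one_div {x : ℝ} (hx : 0 < x) : log x ≤ digamma x + 1 / x := by
  rw [← digamma_add_one hx, ← slope_log_Gamma hx]
  exact convexOn_log_Gamma.slope_le_deriv (mem_Ioi.mpr hx) (mem_Ioi.mpr (by linarith))
    (lt_add_one x) (differentiableAt_log_Gamma (by linarith))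

theorem abs_digamma_sub_log_le {x : ℝ} (hx : 0 < x) : |digamma x - log x| ≤ 1 / x := by
  rw [abs_sub_comm, abs_of_nonneg (sub_nonneg.mpr (digamma_le_log hx))]
  linarith [log_le_digamma_add_one_div hx]

theorem tendsto_digamma_sub_log_atTop : Tendsto (fun x => digamma x - log x) atTop (𝓝 0) := by
  refine squeeze_zero_norm' ?_ (by simpa only [one_div] using tendsto_inv_atTop_zero)
  filter_upwards [eventually_gt_atTop 0] with x hx
  simpa only [norm_eq_abs, one_div] using abs_digamma_sub_log_le hx

theorem norm_le_of_norm_sub_succ_le {E : Type*} [SeminormedAddCommGroup E] {u : ℕ → E}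
    {v : ℕ → ℝ} (hu : Tendsto u atTop (𝓝 0)) (hv : Tendsto v atTop (𝓝 0))
    (h : ∀ n, ‖u (n + 1) - u n‖ ≤ v n - v (n + 1)) : ‖u 0‖ ≤ v 0 := by
  have partial_sum : ∀ n, ‖u 0‖ ≤ ‖u n‖ + (v 0 - v n) := by
    intro n
    induction n with
    | zero => simp
    | succ n ih =>
      have := norm_sub_norm_le (u n) (u (n + 1))
      rw [norm_sub_rev] at this
      linarith [h n]
  have hlim : Tendsto (fun n => ‖u n‖ + (v 0 - v n)) atTop (𝓝 (0 + (v 0 - 0))) :=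
    (tendsto_norm_zero.comp hu).add (tendsto_const_nhds.sub hv)
  simpa using ge_of_tendsto' hlim partial_sum

theorem abs_log_one_add_sub_le {t : ℝ} (ht : |t| ≤ 1 / 2) :
    |log (1 + t) - (t - t ^ 2 / 2 + t ^ 3 / 3)| ≤ 2 * t ^ 4 := by
  have h := abs_log_sub_add_sum_range_le (x := -t) (by rw [abs_neg]; linarith) 3
  norm_num [Finset.sum_range_succ] at h
  have ht4 : |t| ^ 4 = t ^ 4 := by simp [Even.pow_abs ⟨2, rfl⟩]
  calc |log (1 + t) - (t - t ^ 2 / 2 + t ^ 3 / 3)|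
      = |-t + t ^ 2 / 2 + (-t) ^ 3 / 3 + log (1 + t)| := by ring_nf
    _ ≤ |t| ^ 4 / (1 - |t|) := h
    _ ≤ 2 * t ^ 4 := by
      rw [div_le_iff₀ (by linarith), ht4]
      nlinarith [pow_nonneg (abs_nonneg t) 4, abs_nonneg t, pow_two_nonneg (t ^ 2)]

noncomputable def digammaRemainder (x : ℝ) : ℝ :=
  digamma x - (log x - 1 / (2 * x) - 1 / (12 * x ^ 2))

theorem tendsto_digammaRemainder_atTop : Tendsto digammaRemainder atTop (𝓝 0) := by
  have h := (tendsto_digamma_sub_log_atTop.add (tendsto_const_nhds (x := (1 : ℝ)).div_atTop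
    (tendsto_id.const_mul_atTop two_pos))).add (tendsto_const_nhds (x := (1 : ℝ)).div_atTop
    ((tendsto_pow_atTop two_ne_zero).const_mul_atTop (by norm_num : (0 : ℝ) < 12)))
  rw [add_zero, add_zero] at h
  exact h.congr fun x => by simp only [digammaRemainder, id]; ring

theorem digammaRemainder_add_one_sub {x : ℝ} (hx : 0 < x) :
    digammaRemainder (x + 1) - digammaRemainder x =
      -(log (1 + x⁻¹) - (x⁻¹ - x⁻¹ ^ 2 / 2 + x⁻¹ ^ 3 / 3))
        - (3 * x + 4) / (12 * x ^ 3 * (x + 1) ^ 2) := by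
  have hlog : log (x + 1) = log x + log (1 + x⁻¹) := by
    rw [← log_mul hx.ne' (by positivity), mul_add, mul_inv_cancel₀ hx.ne', mul_one]
  simp only [digammaRemainder, digamma_add_one hx, hlog]
  field_simp
  ring

theorem abs_digammaRemainder_add_one_sub_le {x : ℝ} (hx : 2 ≤ x) :
    |digammaRemainder (x + 1) - digammaRemainder x| ≤ 3 / x ^ 4 := by
  have hx0 : 0 < x := by linarith
  have hlog := abs_log_one_add_sub_le (t := x⁻¹)
    (by rw [abs_of_pos (inv_pos.mpr hx0)]; exact inv_le_of_inv_le₀ (by norm_num) (by linarith))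
  have hrat : (3 * x + 4) / (12 * x ^ 3 * (x + 1) ^ 2) ≤ 1 / x ^ 4 := by
    rw [div_le_div_iff₀ (by positivity) (by positivity)]
    nlinarith [pow_pos hx0 3, pow_pos hx0 4, pow_pos hx0 5]
  rw [digammaRemainder_add_one_sub hx0]
  calc _ ≤ |log (1 + x⁻¹) - (x⁻¹ - x⁻¹ ^ 2 / 2 + x⁻¹ ^ 3 / 3)|
          + |(3 * x + 4) / (12 * x ^ 3 * (x + 1) ^ 2)| :=
        (abs_sub _ _).trans_eq (by rw [abs_neg])
    _ ≤ 2 * x⁻¹ ^ 4 + 1 / x ^ 4 := by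
        rw [abs_of_pos (by positivity : 0 < (3 * x + 4) / (12 * x ^ 3 * (x + 1) ^ 2))]
        exact add_le_add hlog hrat
    _ = 3 / x ^ 4 := by ring

theorem three_div_pow_four_le_sub {y : ℝ} (hy : 2 ≤ y) :
    3 / y ^ 4 ≤ 3 / y ^ 3 - 3 / (y + 1) ^ 3 := by
  have hcubic : 0 ≤ y ^ 3 * (2 * y ^ 3 - 2 * y - 1) :=
    mul_nonneg (by positivity) (by nlinarith [mul_le_mul hy hy (by norm_num) (by linarith)])
  rw [div_sub_div _ _ (by positivity) (by positivity),
    div_le_div_iff₀ (by positivity) (by positivity)]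
  nlinarith [hcubic]

theorem abs_digammaRemainder_le {x : ℝ} (hx : 2 ≤ x) : |digammaRemainder x| ≤ 3 / x ^ 3 := by
  have hshift : Tendsto (fun n : ℕ => x + n) atTop atTop :=
    tendsto_atTop_add_const_left atTop x tendsto_natCast_atTop_atTop
  have hv : Tendsto (fun n : ℕ => 3 / (x + n) ^ 3) atTop (𝓝 0) :=
    tendsto_const_nhds.div_atTop ((tendsto_pow_atTop three_ne_zero).comp hshift)
  have hstep (n : ℕ) : |digammaRemainder (x + (n + 1 : ℕ)) - digammaRemainder (x + n)|
      ≤ 3 / (x + n) ^ 3 - 3 / (x + (n + 1 : ℕ)) ^ 3 := by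
    have hxn : 2 ≤ x + n := by linarith [n.cast_nonneg (α := ℝ)]
    rw [Nat.cast_succ, ← add_assoc]
    exact (abs_digammaRemainder_add_one_sub_le hxn).trans (three_div_pow_four_le_sub hxn)
  simpa using norm_le_of_norm_sub_succ_le (u := fun n : ℕ => digammaRemainder (x + n))
    (tendsto_digammaRemainder_atTop.comp hshift) hv hstep

theorem isLittleO_one_div_pow_three_atTop :
    (fun x : ℝ => 1 / x ^ 3) =o[atTop] fun x => 1 / x ^ 2 := by
  simpa only [Function.comp_def, one_div, inv_pow] using
    (isLittleO_pow_pow (𝕜 := ℝ) (by norm_num : 2 < 3)).comp_tendsto tendsto_inv_atTop_zero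

theorem isBigO_digammaRemainder_atTop :
    digammaRemainder =O[atTop] fun x => 1 / x ^ 3 := by
  refine IsBigO.of_bound 3 ?_
  filter_upwards [eventually_ge_atTop 2] with x hx
  rw [norm_eq_abs, norm_div, norm_one, norm_pow, norm_eq_abs, abs_of_nonneg (by linarith : 0 ≤ x),
    mul_one_div]
  exact abs_digammaRemainder_le hx

/-- As `x → ∞`, `ψ(x) = ln x − 1/(2x) − 1/(12x²) + o(1/x²)`. -/
theorem digamma_asymptotic :
    (fun x : ℝ => digamma x - (Real.log x - 1 / (2 * x) - 1 / (12 * x ^ 2)))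
      =o[atTop] fun x : ℝ => 1 / x ^ 2 :=
  isBigO_digammaRemainder_atTop.trans_isLittleO isLittleO_one_div_pow_three_atTop
end

section
/- Let π be the stationary distribution of the PageRank-type chain depending on parameter x_ij, with the derivative system (∂π/∂x_ij)(I − P) = π(∂P/∂x_ij), ∑_k ∂π_k/∂x_ij = 0. If π_i + π_j > 0, then the derivative vector ∂π/∂x_ij is nonzero. -/
/-! If `D = 0`, column `i` of the linear system reads `0 = (π i + π j) / (n - 1)`, since column `i`
of `∂P/∂x_ij` is `1/(n-1)` exactly at rows `i` and `j`. -/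

open Finset

theorem sum_mul_apply_of_eq_ite {ι : Type*} [Fintype ι] [DecidableEq ι]
    (π : ι → ℝ) (M : Matrix ι ι ℝ) (i j : ι) (hij : i ≠ j) (c : ℝ)
    (hM : ∀ a b, M a b =
      if (a = i ∧ b = i) ∨ (a = j ∧ b = i) then c
      else if (a = i ∧ b = j) ∨ (a = j ∧ b = j) then -c
      else 0) :
    ∑ a, π a * M a i = (π i + π j) * c := by
  rw [Fintype.sum_eq_add i j hij, hM, hM]
  · simp only [and_self, and_true, true_or, ↓reduceIte, hij.symm, or_true]
    ring
  · rintro a ⟨hai, haj⟩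
    simp [hM, hai, haj]

theorem one_div_natCast_sub_one_pos {n : ℕ} (hn : 2 ≤ n) : 0 < 1 / ((n : ℝ) - 1) := by
  have : (2 : ℝ) ≤ n := by exact_mod_cast hn
  exact one_div_pos.mpr (by linarith)

theorem pagerank_stationary_deriv_ne_zero_general (n : ℕ) (hn : 2 ≤ n)
    (P dP : Matrix (Fin n) (Fin n) ℝ) (π D : Fin n → ℝ)
    (i j : Fin n) (hij : i ≠ j)
    (hdP : ∀ a b : Fin n, dP a b =
      if (a = i ∧ b = i) ∨ (a = j ∧ b = i) then 1 / ((n : ℝ) - 1)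
      else if (a = i ∧ b = j) ∨ (a = j ∧ b = j) then -(1 / ((n : ℝ) - 1))
      else 0)
    (hsys : ∀ b, ∑ a, D a * ((if a = b then (1:ℝ) else 0) - P a b) =
      ∑ a, π a * dP a b)
    (hpos : 0 < π i + π j) :
    D ≠ 0 := by
  rintro rfl
  have hcol := hsys i
  simp only [Pi.zero_apply, zero_mul, sum_const_zero,
    sum_mul_apply_of_eq_ite π dP i j hij _ hdP] at hcol
  exact (mul_pos hpos (one_div_natCast_sub_one_pos hn)).ne hcol

/-- For the PageRank-type chain, if the derivative vector `D = ∂π/∂x_ij`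
satisfies the linear system `D(I − P) = π(∂P/∂x_ij)` and `∑ₖ Dₖ = 0`, where
`∂P/∂x_ij` has entries `1/(n−1)` at `(i,i),(j,i)`, `−1/(n−1)` at `(i,j),(j,j)`
and `0` elsewhere, and if `π_i + π_j > 0`, then `D ≠ 0`. -/
theorem pagerank_stationary_deriv_ne_zero (n : ℕ) (hn : 2 ≤ n)
    (P dP : Matrix (Fin n) (Fin n) ℝ) (π D : Fin n → ℝ)
    (i j : Fin n) (hij : i ≠ j)
    (hPnonneg : ∀ a b, 0 ≤ P a b) (hProw : ∀ a, ∑ b, P a b = 1)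
    (hπnonneg : ∀ k, 0 ≤ π k) (hπsum : ∑ k, π k = 1)
    (hstat : ∀ b, ∑ a, π a * P a b = π b)
    (hdP : ∀ a b : Fin n, dP a b =
      if (a = i ∧ b = i) ∨ (a = j ∧ b = i) then 1 / ((n : ℝ) - 1)
      else if (a = i ∧ b = j) ∨ (a = j ∧ b = j) then -(1 / ((n : ℝ) - 1))
      else 0)
    (hsys : ∀ b, ∑ a, D a * ((if a = b then (1:ℝ) else 0) - P a b) =
      ∑ a, π a * dP a b)
    (hDsum : ∑ k, D k = 0)
    (hpos : 0 < π i + π j) :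
    D ≠ 0 :=
  pagerank_stationary_deriv_ne_zero_general n hn P dP π D i j hij hdP hsys hpos
end
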